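/- arXiv:1611.01184 — 2 statements merged into one kernel-verified Lean document; each statement's English description precedes it below -/
import Mathlib

section
/- Suppose (v, p, ω, b) is a smooth solution of Kolmogorov's system: div v = 0, ∂_t v + div(v⊗v) − 2ν₀ div((b/ω)D(v)) = −∇p, ∂_t ω + div(ωv) − κ₁ div((b/ω)∇ω) = −κ₂ω², ∂_t b + div(bv) − κ₃ div((b/ω)∇b) = −bω + κ₄(b/ω)|D(v)|² on ℝ × ℝ³. Then for any real a, c and any θ > 0, the rescaled quadruple v_θ(t,x) := θ^{a−c} v(θ^a t, θ^c x), p_θ(t,x) := θ^{2(a−c)} p(θ^a t, θ^c x), ω_θ(t,x) := θ^a ω(θ^a t, θ^c x), b_θ(t,x) := θ^{2(a−c)} b(θ^a t, θ^c x) also solves the same system. -/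
open Real

/-- Spatial partial derivative `∂_i f` of a function on space-time `ℝ × ℝ³`. -/
noncomputable def pdS (f : ℝ × (Fin 3 → ℝ) → ℝ) (i : Fin 3) (q : ℝ × (Fin 3 → ℝ)) : ℝ :=
  fderiv ℝ (fun x => f (q.1, x)) q.2 (Pi.single i 1)

/-- Time derivative `∂_t f` of a function on space-time `ℝ × ℝ³`. -/
noncomputable def pdT (f : ℝ × (Fin 3 → ℝ) → ℝ) (q : ℝ × (Fin 3 → ℝ)) : ℝ :=
  deriv (fun t => f (t, q.2)) q.1

/-- Symmetric gradient `D(v)_{ij} = (∂_i v_j + ∂_j v_i)/2`. -/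
noncomputable def symGrad (v : ℝ × (Fin 3 → ℝ) → Fin 3 → ℝ) (i j : Fin 3)
    (q : ℝ × (Fin 3 → ℝ)) : ℝ :=
  (pdS (fun q => v q j) i q + pdS (fun q => v q i) j q) / 2

/-- Kolmogorov's two-equation system of turbulence on all of `ℝ × ℝ³`:
`div v = 0`, `∂_t v + div(v⊗v) − 2ν₀ div((b/ω)D(v)) = −∇p`,
`∂_t ω + div(ωv) − κ₁ div((b/ω)∇ω) = −κ₂ ω²`,
`∂_t b + div(bv) − κ₃ div((b/ω)∇b) = −bω + κ₄ (b/ω)|D(v)|²`. -/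
def IsKolmogorovSolution (ν₀ κ₁ κ₂ κ₃ κ₄ : ℝ)
    (v : ℝ × (Fin 3 → ℝ) → Fin 3 → ℝ) (p ω b : ℝ × (Fin 3 → ℝ) → ℝ) : Prop :=
  (∀ q, ∑ i, pdS (fun q => v q i) i q = 0) ∧
  (∀ q, ∀ j, pdT (fun q => v q j) q + ∑ i, pdS (fun q => v q i * v q j) i q
      - 2 * ν₀ * ∑ i, pdS (fun q => b q / ω q * symGrad v i j q) i q
      = - pdS p j q) ∧
  (∀ q, pdT ω q + ∑ i, pdS (fun q => ω q * v q i) i q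
      - κ₁ * ∑ i, pdS (fun q => b q / ω q * pdS ω i q) i q = - κ₂ * (ω q) ^ 2) ∧
  (∀ q, pdT b q + ∑ i, pdS (fun q => b q * v q i) i q
      - κ₃ * ∑ i, pdS (fun q => b q / ω q * pdS b i q) i q
      = - b q * ω q + κ₄ * (b q / ω q) * ∑ i, ∑ j, (symGrad v i j q) ^ 2)

/-
With velocity scale `u` and wavenumber `k` (so time is scaled by `u k`), put `v' = u v∘S`,
`p' = u² p∘S`, `ω' = u k ω∘S`, `b' = u² b∘S` with `S(t, x) = (u k t, k x)`. A spatial derivative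
of `f∘S` is `k (∂f)∘S` and a time derivative is `u k (∂ₜf)∘S`, and `b'/ω' = (u/k) (b/ω)∘S`, so
every term of the momentum, `ω` and `b` equations gets multiplied by `u² k`, `u² k²` and `u³ k`
respectively. The theorem is the case `u = θ^(a-c)`, `k = θ^c`.
-/

def rescale (τ k : ℝ) (f : ℝ × (Fin 3 → ℝ) → ℝ) (q : ℝ × (Fin 3 → ℝ)) : ℝ :=
  f (τ * q.1, fun i => k * q.2 i)

section Rescale

variable (τ k : ℝ)

lemma pdS_const_mul (C : ℝ) (f : ℝ × (Fin 3 → ℝ) → ℝ) (i : Fin 3) (q : ℝ × (Fin 3 → ℝ)) :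
    pdS (fun q => C * f q) i q = C * pdS f i q := by
  show fderiv ℝ (C • fun x => f (q.1, x)) q.2 _ = _
  rw [fderiv_const_smul_field]
  rfl

lemma pdT_const_mul (C : ℝ) (f : ℝ × (Fin 3 → ℝ) → ℝ) (q : ℝ × (Fin 3 → ℝ)) :
    pdT (fun q => C * f q) q = C * pdT f q :=
  deriv_const_mul_field C

lemma pdS_rescale (f : ℝ × (Fin 3 → ℝ) → ℝ) (i : Fin 3) (q : ℝ × (Fin 3 → ℝ)) :
    pdS (rescale τ k f) i q = k * rescale τ k (pdS f i) q := by
  simp only [pdS, rescale]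
  exact congrArg (· (Pi.single i 1)) (fderiv_comp_smul (f := fun y => f (τ * q.1, y)) k)

lemma pdT_rescale (f : ℝ × (Fin 3 → ℝ) → ℝ) (q : ℝ × (Fin 3 → ℝ)) :
    pdT (rescale τ k f) q = τ * rescale τ k (pdT f) q :=
  deriv_comp_mul_left τ (fun s => f (s, fun i => k * q.2 i)) q.1

lemma pdS_const_mul_rescale (C : ℝ) (f : ℝ × (Fin 3 → ℝ) → ℝ) (i : Fin 3)
    (q : ℝ × (Fin 3 → ℝ)) :
    pdS (fun q => C * rescale τ k f q) i q = C * k * rescale τ k (pdS f i) q := by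
  rw [pdS_const_mul, pdS_rescale, mul_assoc]

lemma pdT_const_mul_rescale (C : ℝ) (f : ℝ × (Fin 3 → ℝ) → ℝ) (q : ℝ × (Fin 3 → ℝ)) :
    pdT (fun q => C * rescale τ k f q) q = C * τ * rescale τ k (pdT f) q := by
  rw [pdT_const_mul, pdT_rescale, mul_assoc]

lemma const_mul_rescale_mul (C D : ℝ) (f g : ℝ × (Fin 3 → ℝ) → ℝ) (q : ℝ × (Fin 3 → ℝ)) :
    C * rescale τ k f q * (D * rescale τ k g q) = C * D * rescale τ k (fun q => f q * g q) q := by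
  simp only [rescale]; ring

lemma const_mul_rescale_div (C D : ℝ) (f g : ℝ × (Fin 3 → ℝ) → ℝ) (q : ℝ × (Fin 3 → ℝ)) :
    C * rescale τ k f q / (D * rescale τ k g q) = C / D * rescale τ k (fun q => f q / g q) q :=
  mul_div_mul_comm _ _ _ _

lemma symGrad_const_mul_rescale (C : ℝ) (v : ℝ × (Fin 3 → ℝ) → Fin 3 → ℝ) (i j : Fin 3)
    (q : ℝ × (Fin 3 → ℝ)) :
    symGrad (fun q j => C * rescale τ k (fun q => v q j) q) i j q
      = C * k * rescale τ k (symGrad v i j) q := by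
  simp only [symGrad, pdS_const_mul, pdS_rescale]
  simp only [rescale, symGrad]; ring

end Rescale

theorem IsKolmogorovSolution.rescaled {ν₀ κ₁ κ₂ κ₃ κ₄ : ℝ}
    {v : ℝ × (Fin 3 → ℝ) → Fin 3 → ℝ} {p ω b : ℝ × (Fin 3 → ℝ) → ℝ}
    (hsol : IsKolmogorovSolution ν₀ κ₁ κ₂ κ₃ κ₄ v p ω b) (u k : ℝ) :
    IsKolmogorovSolution ν₀ κ₁ κ₂ κ₃ κ₄
      (fun q j => u * rescale (u * k) k (fun q => v q j) q)
      (fun q => u ^ 2 * rescale (u * k) k p q)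
      (fun q => u * k * rescale (u * k) k ω q)
      (fun q => u ^ 2 * rescale (u * k) k b q) := by
  obtain ⟨hdiv, hmom, hvort, henergy⟩ := hsol
  refine ⟨fun q => ?_, fun q j => ?_, fun q => ?_, fun q => ?_⟩ <;>
    simp only [pdS_const_mul_rescale, pdT_const_mul_rescale, const_mul_rescale_mul,
      const_mul_rescale_div, symGrad_const_mul_rescale, mul_pow, ← Finset.mul_sum] <;>
    simp only [rescale]
  · linear_combination u * k * hdiv _
  -- `field_simp` also reshapes the integrands `b / ω * X`, alike in the goal and the hypothesis
  · linear_combination (norm := (field_simp; ring)) u ^ 2 * k * hmom _ j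
  · linear_combination (norm := (field_simp; ring)) u ^ 2 * k ^ 2 * hvort _
  · linear_combination (norm := (field_simp; ring)) u ^ 3 * k * henergy _

theorem kolmogorov_scaling_invariance_general (ν₀ κ₁ κ₂ κ₃ κ₄ : ℝ)
    (v : ℝ × (Fin 3 → ℝ) → Fin 3 → ℝ) (p ω b : ℝ × (Fin 3 → ℝ) → ℝ)
    (hsol : IsKolmogorovSolution ν₀ κ₁ κ₂ κ₃ κ₄ v p ω b)
    (a c θ : ℝ) (hθ : 0 < θ) :
    IsKolmogorovSolution ν₀ κ₁ κ₂ κ₃ κ₄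
      (fun q => fun j => θ ^ (a - c) * v (θ ^ a * q.1, fun i => θ ^ c * q.2 i) j)
      (fun q => θ ^ (2 * (a - c)) * p (θ ^ a * q.1, fun i => θ ^ c * q.2 i))
      (fun q => θ ^ a * ω (θ ^ a * q.1, fun i => θ ^ c * q.2 i))
      (fun q => θ ^ (2 * (a - c)) * b (θ ^ a * q.1, fun i => θ ^ c * q.2 i)) := by
  have htime : θ ^ a = θ ^ (a - c) * θ ^ c := by rw [← rpow_add hθ, sub_add_cancel]
  have hsq : θ ^ (2 * (a - c)) = (θ ^ (a - c)) ^ 2 := by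
    rw [mul_comm, rpow_mul hθ.le, rpow_two]
  rw [htime, hsq]
  exact hsol.rescaled _ _

/-- scaling invariance of Kolmogorov's system. If `(v, p, ω, b)` is a
smooth (C²) solution, then for any reals `a, c` and any `θ > 0`, the rescaled quadruple
`v_θ(t,x) = θ^{a−c} v(θ^a t, θ^c x)`, `p_θ(t,x) = θ^{2(a−c)} p(θ^a t, θ^c x)`,
`ω_θ(t,x) = θ^a ω(θ^a t, θ^c x)`, `b_θ(t,x) = θ^{2(a−c)} b(θ^a t, θ^c x)`
also solves the system. -/
theorem kolmogorov_scaling_invariance (ν₀ κ₁ κ₂ κ₃ κ₄ : ℝ)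
    (hν : 0 < ν₀) (h1 : 0 < κ₁) (h2 : 0 < κ₂) (h3 : 0 < κ₃) (h4 : 0 < κ₄)
    (v : ℝ × (Fin 3 → ℝ) → Fin 3 → ℝ) (p ω b : ℝ × (Fin 3 → ℝ) → ℝ)
    (hv : ∀ j, ContDiff ℝ 2 (fun q => v q j))
    (hp : ContDiff ℝ 2 p) (hω : ContDiff ℝ 2 ω) (hb : ContDiff ℝ 2 b)
    (hsol : IsKolmogorovSolution ν₀ κ₁ κ₂ κ₃ κ₄ v p ω b)
    (a c θ : ℝ) (hθ : 0 < θ) :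
    IsKolmogorovSolution ν₀ κ₁ κ₂ κ₃ κ₄
      (fun q => fun j => θ ^ (a - c) * v (θ ^ a * q.1, fun i => θ ^ c * q.2 i) j)
      (fun q => θ ^ (2 * (a - c)) * p (θ ^ a * q.1, fun i => θ ^ c * q.2 i))
      (fun q => θ ^ a * ω (θ ^ a * q.1, fun i => θ ^ c * q.2 i))
      (fun q => θ ^ (2 * (a - c)) * b (θ ^ a * q.1, fun i => θ ^ c * q.2 i)) :=
  kolmogorov_scaling_invariance_general ν₀ κ₁ κ₂ κ₃ κ₄ v p ω b hsol a c θ hθ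
end

section
/- Suppose (a_k), (b_k) are sequences of measurable functions on a finite measure space with a_k ≥ 0, a_k → a almost everywhere, a > 0 a.e., 0 ≤ b_k ≤ M uniformly, and a_k·b_k → a·c strongly in L². Then b_k → c almost everywhere (along a subsequence) and b_k → c strongly in L^q for every q ∈ [1, ∞). -/
/-!
The `L²` convergence of `a_k b_k` gives convergence in measure. Along any subsequence a further
subsequence of `a_k b_k` converges a.e., and dividing by `a_k → a ≠ 0` shows that `b_k → c` in
measure. The `b_k` are uniformly bounded, hence uniformly integrable in every `L^q`, `q < ∞`, and
Vitali's convergence theorem upgrades convergence in measure to convergence in `L^q`.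
-/

open MeasureTheory ENNReal Filter Topology

theorem Filter.Tendsto.of_mul_left₀ {ι 𝕜 : Type*} [NormedField 𝕜] {l : Filter ι}
    {f g : ι → 𝕜} {a c : 𝕜} (hf : Tendsto f l (𝓝 a)) (ha : a ≠ 0)
    (hfg : Tendsto (fun i => f i * g i) l (𝓝 (a * c))) : Tendsto g l (𝓝 c) := by
  have hquot : Tendsto (fun i => f i * g i / f i) l (𝓝 (a * c / a)) := hfg.div hf ha
  rw [mul_div_cancel_left₀ c ha] at hquot
  refine hquot.congr' ?_
  filter_upwards [hf.eventually_ne ha] with i hi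
  exact mul_div_cancel_left₀ (g i) hi

namespace MeasureTheory

variable {α : Type*} [MeasurableSpace α] {μ : Measure α}

theorem ae_mem_of_ae_tendsto {ι β : Type*} [Countable ι] [TopologicalSpace β] {l : Filter ι}
    [l.NeBot] {f : ι → α → β} {g : α → β} {s : Set β} (hs : IsClosed s)
    (hf : ∀ i, ∀ᵐ x ∂μ, f i x ∈ s) (hfg : ∀ᵐ x ∂μ, Tendsto (fun i => f i x) l (𝓝 (g x))) :
    ∀ᵐ x ∂μ, g x ∈ s := by
  filter_upwards [ae_all_iff.2 hf, hfg] with x hmem hlim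
  exact hs.mem_of_tendsto hlim (Eventually.of_forall hmem)

theorem unifIntegrable_of_ae_norm_le {ι β : Type*} [NormedAddCommGroup β] {p : ℝ≥0∞}
    (hp : 1 ≤ p) (hp' : p ≠ ∞) {f : ι → α → β} (hf : ∀ i, AEStronglyMeasurable (f i) μ)
    (C : ℝ) (hC : ∀ i, ∀ᵐ x ∂μ, ‖f i x‖ ≤ C) : UnifIntegrable f p μ := by
  refine unifIntegrable_of hp hp' hf fun ε _ => ⟨C.toNNReal + 1, fun i => ?_⟩
  have hvanish : {x | C.toNNReal + 1 ≤ ‖f i x‖₊}.indicator (f i) =ᵐ[μ] 0 := by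
    filter_upwards [hC i] with x hx
    refine Set.indicator_of_notMem (fun hmem => ?_) _
    have : C.toNNReal + 1 ≤ ‖f i x‖₊ := hmem
    rw [← NNReal.coe_le_coe, NNReal.coe_add, coe_nnnorm, NNReal.coe_one] at this
    linarith [C.le_coe_toNNReal]
  rw [eLpNorm_congr_ae hvanish, eLpNorm_zero]
  exact zero_le

theorem TendstoInMeasure.of_mul_left₀ [IsFiniteMeasure μ] {𝕜 : Type*} [NormedField 𝕜]
    {f g : ℕ → α → 𝕜} {a c : α → 𝕜} (hg : ∀ n, AEStronglyMeasurable (g n) μ)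
    (hf : ∀ᵐ x ∂μ, Tendsto (fun n => f n x) atTop (𝓝 (a x))) (ha : ∀ᵐ x ∂μ, a x ≠ 0)
    (hfg : TendstoInMeasure μ (fun n x => f n x * g n x) atTop (fun x => a x * c x)) :
    TendstoInMeasure μ g atTop c := by
  refine (exists_seq_tendstoInMeasure_atTop_iff hg).2 fun ns hns => ?_
  obtain ⟨ns', hns', hprod⟩ := (hfg.comp hns.tendsto_atTop).exists_seq_tendsto_ae
  refine ⟨ns', hns', ?_⟩
  filter_upwards [hf, ha, hprod] with x hfx hax hprodx
  exact (hfx.comp (hns.comp hns').tendsto_atTop).of_mul_left₀ hax hprodx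

end MeasureTheory

theorem ae_and_Lq_convergence_from_product_general {X : Type*} [MeasurableSpace X]
    (ν : Measure X) [IsFiniteMeasure ν]
    (a c : X → ℝ) (aseq bseq : ℕ → X → ℝ) (M : ℝ)
    (ham : ∀ k, Measurable (aseq k)) (hbm : ∀ k, Measurable (bseq k))
    (ham' : Measurable a) (hcm : Measurable c)
    (hae : ∀ᵐ x ∂ν, Tendsto (fun k => aseq k x) atTop (nhds (a x)))
    (ha0 : ∀ᵐ x ∂ν, 0 < a x)
    (hbbd : ∀ k, ∀ᵐ x ∂ν, 0 ≤ bseq k x ∧ bseq k x ≤ M)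
    (hL2 : Tendsto (fun k => eLpNorm (fun x => aseq k x * bseq k x - a x * c x) 2 ν)
      atTop (nhds 0)) :
    (∃ φ : ℕ → ℕ, StrictMono φ ∧
      ∀ᵐ x ∂ν, Tendsto (fun k => bseq (φ k) x) atTop (nhds (c x))) ∧
    (∀ q : ℝ, 1 ≤ q →
      Tendsto (fun k => eLpNorm (fun x => bseq k x - c x) (ENNReal.ofReal q) ν)
        atTop (nhds 0)) := by
  have hprod : TendstoInMeasure ν (fun k x => aseq k x * bseq k x) atTop (fun x => a x * c x) :=
    tendstoInMeasure_of_tendsto_eLpNorm two_ne_zero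
      (fun k => ((ham k).mul (hbm k)).aestronglyMeasurable)
      (ham'.mul hcm).aestronglyMeasurable hL2
  have hb : TendstoInMeasure ν bseq atTop c :=
    hprod.of_mul_left₀ (fun k => (hbm k).aestronglyMeasurable) hae (ha0.mono fun _ => ne_of_gt)
  obtain ⟨φ, hφ, hφc⟩ := hb.exists_seq_tendsto_ae
  refine ⟨⟨φ, hφ, hφc⟩, fun q hq => ?_⟩
  have hp : 1 ≤ ENNReal.ofReal q := by simpa using ENNReal.ofReal_le_ofReal hq
  have hbM : ∀ k, ∀ᵐ x ∂ν, ‖bseq k x‖ ≤ M := fun k =>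
    (hbbd k).mono fun _ hx => abs_le.2 ⟨by linarith [hx.1], hx.2⟩
  have hcM : ∀ᵐ x ∂ν, ‖c x‖ ≤ M :=
    ae_mem_of_ae_tendsto (isClosed_le continuous_norm continuous_const) (fun k => hbM (φ k)) hφc
  exact tendsto_Lp_finite_of_tendstoInMeasure hp ofReal_ne_top
    (fun k => (hbm k).aestronglyMeasurable) (MemLp.of_bound hcm.aestronglyMeasurable M hcM)
    (unifIntegrable_of_ae_norm_le hp ofReal_ne_top (fun k => (hbm k).aestronglyMeasurable) M hbM)
    hb

/-- on a finite measure space, if `a_k ≥ 0`, `a_k → a` a.e. with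
`a > 0` a.e., `0 ≤ b_k ≤ M` uniformly, and `a_k b_k → a·c` strongly in `L²`, then
(along a subsequence) `b_k → c` a.e., and `b_k → c` strongly in `L^q` for every
`q ∈ [1, ∞)`. -/
theorem ae_and_Lq_convergence_from_product {X : Type*} [MeasurableSpace X]
    (ν : Measure X) [IsFiniteMeasure ν]
    (a c : X → ℝ) (aseq bseq : ℕ → X → ℝ) (M : ℝ) (hM : 0 < M)
    (ham : ∀ k, Measurable (aseq k)) (hbm : ∀ k, Measurable (bseq k))
    (ham' : Measurable a) (hcm : Measurable c)
    (hapos : ∀ k, ∀ᵐ x ∂ν, 0 ≤ aseq k x)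
    (hae : ∀ᵐ x ∂ν, Tendsto (fun k => aseq k x) atTop (nhds (a x)))
    (ha0 : ∀ᵐ x ∂ν, 0 < a x)
    (hbbd : ∀ k, ∀ᵐ x ∂ν, 0 ≤ bseq k x ∧ bseq k x ≤ M)
    (hL2 : Tendsto (fun k => eLpNorm (fun x => aseq k x * bseq k x - a x * c x) 2 ν)
      atTop (nhds 0)) :
    (∃ φ : ℕ → ℕ, StrictMono φ ∧
      ∀ᵐ x ∂ν, Tendsto (fun k => bseq (φ k) x) atTop (nhds (c x))) ∧
    (∀ q : ℝ, 1 ≤ q →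
      Tendsto (fun k => eLpNorm (fun x => bseq k x - c x) (ENNReal.ofReal q) ν)
        atTop (nhds 0)) :=
  ae_and_Lq_convergence_from_product_general ν a c aseq bseq M ham hbm ham' hcm hae ha0 hbbd hL2
end
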